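/- Let χ be a kernel with M₀(χ), M₁(χ) < ∞ and let f: ℝ⁺ → ℝ be bounded and log-uniformly continuous. Then for every δ > 0, w > 0 and t > 0: |(S_w^χ f)(t) - f(t)| ≤ M₀(χ)·ω(f, δ) + (ω(f, δ)/(wδ))·M₁(χ). -/

import Mathlib

open Real Filter Set MeasureTheory

noncomputable def expSamp (χ f : ℝ → ℝ) (w t : ℝ) : ℝ :=
  ∑' k : ℤ, χ (Real.exp (-(k : ℝ)) * t ^ w) * f (Real.exp ((k : ℝ) / w))

noncomputable def psiMinus (χ : ℝ → ℝ) (u : ℝ) : ℝ :=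
  ∑' k : ℤ, if Real.log u < (k : ℝ) then χ (u * Real.exp (-(k : ℝ))) else 0

noncomputable def psiPlus (χ : ℝ → ℝ) (u : ℝ) : ℝ :=
  ∑' k : ℤ, if (k : ℝ) < Real.log u then χ (u * Real.exp (-(k : ℝ))) else 0

/-- χ is a kernel: absolute summability, partition of unity, and a finite absolute
moment of some order ν > 0. -/
def IsKernel (χ : ℝ → ℝ) : Prop :=
  (∀ u : ℝ, 0 < u → Summable fun k : ℤ => |χ (Real.exp (-(k : ℝ)) * u)|) ∧
  (∀ u : ℝ, 0 < u → HasSum (fun k : ℤ => χ (Real.exp (-(k : ℝ)) * u)) 1) ∧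
  ∃ ν : ℝ, 0 < ν ∧ ∃ C : ℝ, ∀ u : ℝ, 0 < u →
    (Summable fun k : ℤ => |χ (Real.exp (-(k : ℝ)) * u)| * |(k : ℝ) - Real.log u| ^ ν) ∧
    ∑' k : ℤ, |χ (Real.exp (-(k : ℝ)) * u)| * |(k : ℝ) - Real.log u| ^ ν ≤ C

/-- Logarithmic modulus of continuity. -/
noncomputable def logMod (f : ℝ → ℝ) (δ : ℝ) : ℝ :=
  sSup {d : ℝ | ∃ p q : ℝ, 0 < p ∧ 0 < q ∧ |Real.log p - Real.log q| ≤ δ ∧ d = |f p - f q|}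

/-- Sup norm of a function on the positive reals. -/
noncomputable def supNormPos (f : ℝ → ℝ) : ℝ := ⨆ x : {x : ℝ // 0 < x}, |f x.1|

/-- Absolute moment of order ν of the kernel χ. -/
noncomputable def absMoment (χ : ℝ → ℝ) (ν : ℝ) : ℝ :=
  ⨆ u : {u : ℝ // 0 < u},
    ∑' k : ℤ, |χ (Real.exp (-(k : ℝ)) * u.1)| * |(k : ℝ) - Real.log u.1| ^ ν

/-- log-uniform continuity on ℝ⁺. -/
def LogUniformCont (f : ℝ → ℝ) : Prop :=
  ∀ ε : ℝ, 0 < ε → ∃ δ : ℝ, 0 < δ ∧ ∀ p q : ℝ, 0 < p → 0 < q →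
    |Real.log p - Real.log q| < δ → |f p - f q| < ε

/-- The second order Mellin B-spline. -/
noncomputable def mellinB2 (t : ℝ) : ℝ :=
  if 1 ≤ t ∧ t ≤ Real.exp 1 then 1 - Real.log t
  else if Real.exp (-1) ≤ t ∧ t < 1 then 1 + Real.log t
  else 0

/-! Chaining from `log q` to `log p` in steps of length at most `δ` gives
`|f p - f q| ≤ ω(f, δ) (1 + |log p - log q| / δ)`. Since the kernel sums to one,
`S_w f (t) - f t = ∑ₖ χ(e^{-k} t^w) (f(e^{k/w}) - f t)`, and as `|k/w - log t| = |k - log t^w| / w`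
the termwise bound splits the error into `ω(f, δ) M₀(χ)` and `ω(f, δ) M₁(χ) / (w δ)`. -/

section Chaining

variable {E F : Type*} [NormedAddCommGroup E] [NormedSpace ℝ E] [PseudoMetricSpace F]

theorem dist_le_nat_mul_of_dist_le {g : E → F} {δ ω : ℝ}
    (hg : ∀ x y, dist x y ≤ δ → dist (g x) (g y) ≤ ω) (n : ℕ) {x y : E}
    (hxy : dist x y ≤ n * δ) : dist (g x) (g y) ≤ n * ω := by
  induction n generalizing x with
  | zero =>
    have : x = y := dist_le_zero.mp (by simpa using hxy)
    simp [this]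
  | succ n ih =>
    set r : E := y + ((n : ℝ) / (n + 1)) • (x - y)
    have hxr : x - r = (1 / ((n : ℝ) + 1)) • (x - y) := by
      have : (1 : ℝ) / (n + 1) = 1 - n / (n + 1) := by field_simp; ring
      rw [this, sub_smul, one_smul]
      simp only [r]; abel
    have hry : r - y = ((n : ℝ) / (n + 1)) • (x - y) := by simp [r]
    have hxy' : dist x y ≤ (n + 1) * δ := by exact_mod_cast hxy
    have h₁ : dist x r ≤ δ := by
      rw [dist_eq_norm, hxr, norm_smul, ← dist_eq_norm, Real.norm_of_nonneg (by positivity)]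
      calc 1 / ((n : ℝ) + 1) * dist x y ≤ 1 / ((n : ℝ) + 1) * ((n + 1) * δ) := by gcongr
        _ = δ := by field_simp
    have h₂ : dist r y ≤ n * δ := by
      rw [dist_eq_norm, hry, norm_smul, ← dist_eq_norm, Real.norm_of_nonneg (by positivity)]
      calc (n : ℝ) / (n + 1) * dist x y ≤ (n : ℝ) / (n + 1) * ((n + 1) * δ) := by gcongr
        _ = n * δ := by field_simp
    calc dist (g x) (g y) ≤ dist (g x) (g r) + dist (g r) (g y) := dist_triangle _ _ _
      _ ≤ ω + n * ω := add_le_add (hg x r h₁) (ih h₂)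
      _ = (n + 1 : ℕ) * ω := by push_cast; ring

theorem dist_le_mul_one_add_div_of_dist_le {g : E → F} {δ ω : ℝ} (hδ : 0 < δ) (hω : 0 ≤ ω)
    (hg : ∀ x y, dist x y ≤ δ → dist (g x) (g y) ≤ ω) (x y : E) :
    dist (g x) (g y) ≤ ω * (1 + dist x y / δ) := by
  have hceil : dist x y ≤ ⌈dist x y / δ⌉₊ * δ := (div_le_iff₀ hδ).mp (Nat.le_ceil _)
  calc dist (g x) (g y) ≤ ⌈dist x y / δ⌉₊ * ω := dist_le_nat_mul_of_dist_le hg _ hceil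
    _ ≤ (dist x y / δ + 1) * ω := by
        gcongr; exact (Nat.ceil_lt_add_one (by positivity)).le
    _ = ω * (1 + dist x y / δ) := by ring

end Chaining

section LogModulus

variable {f : ℝ → ℝ} {B δ : ℝ}

theorem abs_sub_le_logMod (hf : ∀ x, 0 < x → |f x| ≤ B) {p q : ℝ} (hp : 0 < p) (hq : 0 < q)
    (hpq : |log p - log q| ≤ δ) : |f p - f q| ≤ logMod f δ := by
  refine le_csSup ⟨B + B, ?_⟩ ⟨p, q, hp, hq, hpq, rfl⟩
  rintro _ ⟨p, q, hp, hq, -, rfl⟩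
  exact (abs_sub _ _).trans (add_le_add (hf p hp) (hf q hq))

theorem logMod_nonneg (hf : ∀ x, 0 < x → |f x| ≤ B) (hδ : 0 ≤ δ) : 0 ≤ logMod f δ := by
  simpa using abs_sub_le_logMod hf one_pos one_pos (by simpa using hδ)

theorem abs_sub_le_logMod_mul (hf : ∀ x, 0 < x → |f x| ≤ B) (hδ : 0 < δ) {p q : ℝ}
    (hp : 0 < p) (hq : 0 < q) :
    |f p - f q| ≤ logMod f δ * (1 + |log p - log q| / δ) := by
  have hexp : ∀ x y : ℝ, dist x y ≤ δ → dist (f (exp x)) (f (exp y)) ≤ logMod f δ :=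
    fun x y hxy ↦ abs_sub_le_logMod hf (exp_pos x) (exp_pos y) (by simpa [Real.dist_eq] using hxy)
  simpa [Real.dist_eq, exp_log hp, exp_log hq] using
    dist_le_mul_one_add_div_of_dist_le hδ (logMod_nonneg hf hδ.le) hexp (log p) (log q)

end LogModulus

theorem abs_tsum_mul_sub_le {ι : Type*} {a g d : ι → ℝ} {c ω C : ℝ} (ha : HasSum a 1)
    (h₀ : Summable fun k ↦ |a k|) (h₁ : Summable fun k ↦ |a k| * d k)
    (hg : ∀ k, |g k - c| ≤ ω + C * d k) :
    |∑' k, a k * g k - c| ≤ ω * ∑' k, |a k| + C * ∑' k, |a k| * d k := by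
  have hbound : ∀ k, |a k * (g k - c)| ≤ ω * |a k| + C * (|a k| * d k) := fun k ↦ by
    rw [abs_mul]
    calc |a k| * |g k - c| ≤ |a k| * (ω + C * d k) := by gcongr; exact hg k
      _ = ω * |a k| + C * (|a k| * d k) := by ring
  have hmajor : Summable fun k ↦ ω * |a k| + C * (|a k| * d k) :=
    (h₀.mul_left ω).add (h₁.mul_left C)
  have habs : Summable fun k ↦ |a k * (g k - c)| :=
    hmajor.of_nonneg_of_le (fun _ ↦ abs_nonneg _) hbound
  have hsplit : ∑' k, a k * g k - c = ∑' k, a k * (g k - c) := by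
    have h := habs.of_abs.hasSum.add (ha.mul_right c)
    simp only [← mul_add, sub_add_cancel, one_mul] at h
    rw [h.tsum_eq, add_sub_cancel_right]
  calc |∑' k, a k * g k - c| = |∑' k, a k * (g k - c)| := by rw [hsplit]
    _ ≤ ∑' k, |a k * (g k - c)| := norm_tsum_le_tsum_norm (f := fun k ↦ a k * (g k - c)) habs
    _ ≤ ∑' k, (ω * |a k| + C * (|a k| * d k)) := habs.tsum_le_tsum hbound hmajor
    _ = ω * ∑' k, |a k| + C * ∑' k, |a k| * d k := by
        rw [(h₀.mul_left ω).tsum_add (h₁.mul_left C), tsum_mul_left, tsum_mul_left]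

theorem abs_sub_le_logMod_exp_div {f : ℝ → ℝ} {B δ w t : ℝ} (hf : ∀ x, 0 < x → |f x| ≤ B)
    (hδ : 0 < δ) (hw : 0 < w) (ht : 0 < t) (s : ℝ) :
    |f (exp (s / w)) - f t| ≤ logMod f δ + logMod f δ / (w * δ) * |s - log (t ^ w)| := by
  have hlog : |s / w - log t| = |s - log (t ^ w)| / w := by
    rw [log_rpow ht, ← abs_of_pos hw, ← abs_div, abs_of_pos hw]
    congr 1; field_simp
  calc |f (exp (s / w)) - f t|
      ≤ logMod f δ * (1 + |log (exp (s / w)) - log t| / δ) :=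
        abs_sub_le_logMod_mul hf hδ (exp_pos _) ht
    _ = logMod f δ + logMod f δ / (w * δ) * |s - log (t ^ w)| := by
        rw [log_exp, hlog]; field_simp

theorem tsum_le_absMoment {χ : ℝ → ℝ} {ν u : ℝ}
    (hb : BddAbove (Set.range fun u : {u : ℝ // 0 < u} =>
      ∑' k : ℤ, |χ (exp (-(k : ℝ)) * u.1)| * |(k : ℝ) - log u.1| ^ ν)) (hu : 0 < u) :
    ∑' k : ℤ, |χ (exp (-(k : ℝ)) * u)| * |(k : ℝ) - log u| ^ ν ≤ absMoment χ ν :=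
  le_ciSup hb (⟨u, hu⟩ : {u : ℝ // 0 < u})

theorem stmt18_general (χ f : ℝ → ℝ)
    (hχ1 : ∀ u : ℝ, 0 < u → HasSum (fun k : ℤ => χ (Real.exp (-(k : ℝ)) * u)) 1)
    (hs0 : ∀ u : ℝ, 0 < u → Summable fun k : ℤ => |χ (Real.exp (-(k : ℝ)) * u)|)
    (hs1 : ∀ u : ℝ, 0 < u →
      Summable fun k : ℤ => |χ (Real.exp (-(k : ℝ)) * u)| * |(k : ℝ) - Real.log u| ^ (1 : ℝ))
    (hb0 : BddAbove (Set.range fun u : {u : ℝ // 0 < u} =>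
      ∑' k : ℤ, |χ (Real.exp (-(k : ℝ)) * u.1)| * |(k : ℝ) - Real.log u.1| ^ (0 : ℝ)))
    (hb1 : BddAbove (Set.range fun u : {u : ℝ // 0 < u} =>
      ∑' k : ℤ, |χ (Real.exp (-(k : ℝ)) * u.1)| * |(k : ℝ) - Real.log u.1| ^ (1 : ℝ)))
    (B : ℝ) (hf : ∀ x : ℝ, 0 < x → |f x| ≤ B) :
    ∀ δ : ℝ, 0 < δ → ∀ w : ℝ, 0 < w → ∀ t : ℝ, 0 < t →
      |expSamp χ f w t - f t| ≤
        absMoment χ 0 * logMod f δ + logMod f δ / (w * δ) * absMoment χ 1 := by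
  intro δ hδ w hw t ht
  have hu : 0 < t ^ w := rpow_pos_of_pos ht w
  have hω : 0 ≤ logMod f δ := logMod_nonneg hf hδ.le
  have hM₀ := tsum_le_absMoment hb0 hu
  have hM₁ := tsum_le_absMoment hb1 hu
  simp only [rpow_zero, rpow_one, mul_one] at hM₀ hM₁
  calc |expSamp χ f w t - f t|
      ≤ logMod f δ * ∑' k : ℤ, |χ (exp (-(k : ℝ)) * t ^ w)| + logMod f δ / (w * δ) *
          ∑' k : ℤ, |χ (exp (-(k : ℝ)) * t ^ w)| * |(k : ℝ) - log (t ^ w)| :=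
        abs_tsum_mul_sub_le (hχ1 _ hu) (hs0 _ hu) (by simpa only [rpow_one] using hs1 _ hu)
          fun k ↦ abs_sub_le_logMod_exp_div hf hδ hw ht k
    _ ≤ absMoment χ 0 * logMod f δ + logMod f δ / (w * δ) * absMoment χ 1 := by
        rw [mul_comm (absMoment χ 0)]
        gcongr

/-- Basic approximation estimate via the logarithmic modulus of continuity. -/
theorem stmt18 (χ f : ℝ → ℝ)
    (hχ1 : ∀ u : ℝ, 0 < u → HasSum (fun k : ℤ => χ (Real.exp (-(k : ℝ)) * u)) 1)
    (hs0 : ∀ u : ℝ, 0 < u → Summable fun k : ℤ => |χ (Real.exp (-(k : ℝ)) * u)|)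
    (hs1 : ∀ u : ℝ, 0 < u →
      Summable fun k : ℤ => |χ (Real.exp (-(k : ℝ)) * u)| * |(k : ℝ) - Real.log u| ^ (1 : ℝ))
    (hb0 : BddAbove (Set.range fun u : {u : ℝ // 0 < u} =>
      ∑' k : ℤ, |χ (Real.exp (-(k : ℝ)) * u.1)| * |(k : ℝ) - Real.log u.1| ^ (0 : ℝ)))
    (hb1 : BddAbove (Set.range fun u : {u : ℝ // 0 < u} =>
      ∑' k : ℤ, |χ (Real.exp (-(k : ℝ)) * u.1)| * |(k : ℝ) - Real.log u.1| ^ (1 : ℝ)))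
    (B : ℝ) (hf : ∀ x : ℝ, 0 < x → |f x| ≤ B) (hfc : LogUniformCont f) :
    ∀ δ : ℝ, 0 < δ → ∀ w : ℝ, 0 < w → ∀ t : ℝ, 0 < t →
      |expSamp χ f w t - f t| ≤
        absMoment χ 0 * logMod f δ + logMod f δ / (w * δ) * absMoment χ 1 :=
  stmt18_general χ f hχ1 hs0 hs1 hb0 hb1 B hf
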